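/- Assume (A.1) and (A.2). If A∈𝒳 satisfies ψ(A)>0 and P_k^K(x,A)=1 for all x∈A (for some fixed k∈{1,…,K}), then π(A)=1. -/

import Mathlib

open MeasureTheory ProbabilityTheory Filter Matrix
open scoped BoundedContinuousFunction ENNReal

noncomputable section

variable {X : Type*} [MeasurableSpace X]

/-- Action of a kernel on a (vector-valued) function: `Πf(x) = ∫ f(y) Π(x,dy)`. -/
def kApp {E : Type*} [NormedAddCommGroup E] [NormedSpace ℝ E]
    (κ : Kernel X X) (f : X → E) (x : X) : E := ∫ y, f y ∂(κ x)

/-- `sweepOp Ks t k f = P_k^t f`, the length-`t` sweep composition starting at index `k`,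
acting on functions. -/
def sweepOp {E : Type*} [NormedAddCommGroup E] [NormedSpace ℝ E]
    (Ks : ℕ → Kernel X X) : ℕ → ℕ → (X → E) → X → E
  | 0, _, f => f
  | (t+1), k, f => kApp (Ks k) (sweepOp Ks t (k+1) f)

/-- `sweepKer Ks t k = P_k^t` as a kernel. -/
def sweepKer (Ks : ℕ → Kernel X X) : ℕ → ℕ → Kernel X X
  | 0, _ => Kernel.id
  | (t+1), k => (sweepKer Ks t (k+1)) ∘ₖ (Ks k)

/-- `m`-fold iterate of a kernel. -/
def kpow (κ : Kernel X X) : ℕ → Kernel X X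
  | 0 => Kernel.id
  | (m+1) => κ ∘ₖ kpow κ m

/-- `π`-stationarity of a kernel. -/
def IsKernelStationary (π : Measure X) (κ : Kernel X X) : Prop :=
  ∀ A : Set X, MeasurableSet A → ∫⁻ x, κ x A ∂π = π A

/-- A Gibbs kernel with respect to `π`: a regular conditional distribution kernel
with respect to some sub-σ-algebra. -/
def IsGibbsKernel (π : Measure X) (κ : Kernel X X) : Prop :=
  ∃ m : MeasurableSpace X, m ≤ ‹MeasurableSpace X› ∧
    ∀ A : Set X, MeasurableSet A →
      (fun x => (κ x A).toReal) =ᵐ[π] π[A.indicator (fun _ => (1:ℝ)) | m]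

/-- A small set for a kernel. -/
def IsSmallSet (κ : Kernel X X) (C : Set X) : Prop :=
  ∃ m : ℕ, 1 ≤ m ∧ ∃ νm : Measure X, νm ≠ 0 ∧
    ∀ x ∈ C, ∀ B : Set X, MeasurableSet B → νm B ≤ (kpow κ m) x B

/-- Geometric drift condition (A.3) for the `K`-step composition starting at `k`,
with drift function `V`. -/
def GeoDrift (Ks : ℕ → Kernel X X) (K k : ℕ) (V : X → ℝ) : Prop :=
  Measurable V ∧ (∀ x, 1 ≤ V x) ∧
  ∃ C : Set X, MeasurableSet C ∧ IsSmallSet (sweepKer Ks K k) C ∧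
  ∃ lam b : ℝ, lam < 1 ∧
    (∀ x, Integrable V ((sweepKer Ks K k) x)) ∧
    (∀ x, kApp (sweepKer Ks K k) V x ≤ lam * V x + b * C.indicator (fun _ => (1:ℝ)) x)

/-- ψ-irreducibility (A.2). -/
def SweepIrreducible (Ks : ℕ → Kernel X X) (K : ℕ) (ψ : Measure X) : Prop :=
  ∀ k < K, ∀ A : Set X, MeasurableSet A → 0 < ψ A → ∀ x : X,
    ∃ t : ℕ, 1 ≤ t ∧ 0 < (sweepKer Ks (K * t) k) x A

/-- Aperiodicity (A.4) of the composition kernel `P_k^K`, relative to ψ. -/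
def IsAperiodic (Ks : ℕ → Kernel X X) (K k : ℕ) (ψ : Measure X) : Prop :=
  ¬ ∃ d : ℕ, 2 ≤ d ∧ ∃ D : ℕ → Set X,
    (∀ i < d, MeasurableSet (D i)) ∧
    (∀ i < d, ∀ j < d, i ≠ j → Disjoint (D i) (D j)) ∧
    (∀ i < d, ∀ x ∈ D i, (sweepKer Ks K k) x (D ((i+1) % d)) = 1) ∧
    ψ ((⋃ i ∈ Finset.range d, D i)ᶜ) = 0

/-- The Poisson-equation solution `ĝ_k = ∑_{t≥0} P_k^t g` (defined as a pointwise tsum). -/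
def ghat {d : ℕ} (Ks : ℕ → Kernel X X) (g : X → Fin d → ℝ) (k : ℕ) (x : X) :
    Fin d → ℝ := fun i => ∑' t : ℕ, sweepOp Ks t k g x i

/-- The matrix `∫ π(dx) u(x) v(x)ᵀ`. -/
def covMat {d e : ℕ} (π : Measure X) (u : X → Fin d → ℝ) (v : X → Fin e → ℝ) :
    Matrix (Fin d) (Fin e) ℝ :=
  Matrix.of fun i j => ∫ x, u x i * v x j ∂π

/-- The matrix `U_k = ∫ π(dx){ffᵀ − (Π_k f)(Π_k f)ᵀ}`. -/
def Umat {p : ℕ} (π : Measure X) (Ks : ℕ → Kernel X X) (f : X → Fin p → ℝ) (k : ℕ) :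
    Matrix (Fin p) (Fin p) ℝ :=
  covMat π f f - covMat π (kApp (Ks k) f) (kApp (Ks k) f)

/-- The matrix `V_k = ∫ π(dx){f ĝ_{σ(k)}ᵀ − (Π_k f)(Π_k ĝ_{σ(k)})ᵀ}`. -/
def Vmat {p d : ℕ} (π : Measure X) (Ks : ℕ → Kernel X X) (f : X → Fin p → ℝ)
    (g : X → Fin d → ℝ) (k : ℕ) : Matrix (Fin p) (Fin d) ℝ :=
  covMat π f (ghat Ks g (k+1))
    - covMat π (kApp (Ks k) f) (kApp (Ks k) (ghat Ks g (k+1)))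

/-- The common part of the asymptotic variance:
`∫π g gᵀ + K⁻¹ ∑_k ∑_{t≥1} ∫π {g (P_k^t g)ᵀ + (P_k^t g) gᵀ}`. -/
def sigmaBase {d : ℕ} (π : Measure X) (Ks : ℕ → Kernel X X) (K : ℕ)
    (g : X → Fin d → ℝ) : Matrix (Fin d) (Fin d) ℝ :=
  covMat π g g + (K : ℝ)⁻¹ • ∑ k ∈ Finset.range K, ∑' t : ℕ,
    (covMat π g (sweepOp Ks (t+1) k g) + covMat π (sweepOp Ks (t+1) k g) g)

/-- The σ-algebra generated by `X_0, …, X_t`. -/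
def past {Ω : Type*} (Xt : ℕ → Ω → X) (t : ℕ) : MeasurableSpace Ω :=
  ⨆ i ∈ Finset.range (t+1), MeasurableSpace.comap (Xt i) ‹MeasurableSpace X›

/-- A (time-inhomogeneous) Markov chain with initial law `ν` that at time `t` uses the
transition kernel `Ks t` to generate `X_{t+1}` from `X_t`. -/
structure SweepChain {Ω : Type*} [MeasurableSpace Ω] (Ks : ℕ → Kernel X X)
    (ν : Measure X) (P : Measure Ω) (Xt : ℕ → Ω → X) : Prop where
  meas : ∀ t, Measurable (Xt t)
  init : P.map (Xt 0) = ν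
  markov : ∀ t, ∀ A : Set X, MeasurableSet A →
    (P[fun ω => A.indicator (fun _ => (1:ℝ)) (Xt (t+1) ω) | past Xt t])
      =ᵐ[P] fun ω => ((Ks t) (Xt t ω) A).toReal

/-- `M^{-1/2} S_M` converges in distribution to a centered Gaussian limit with
covariance matrix `Sig` (identified through its characteristic function). -/
def GaussLimit {Ω : Type*} [MeasurableSpace Ω] {d : ℕ} (P : Measure Ω)
    (S : ℕ → Ω → Fin d → ℝ) (Sig : Matrix (Fin d) (Fin d) ℝ) : Prop :=
  ∃ μZ : Measure (Fin d → ℝ), IsProbabilityMeasure μZ ∧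
    (∀ u : Fin d → ℝ,
      ∫ z, Complex.exp (Complex.I * ((∑ i, u i * z i : ℝ) : ℂ)) ∂μZ
        = Complex.exp (-(((u ⬝ᵥ Sig.mulVec u : ℝ) : ℂ)) / 2)) ∧
    ∀ φ : (Fin d → ℝ) →ᵇ ℝ,
      Tendsto (fun M : ℕ => ∫ ω, φ ((M : ℝ) ^ (-(1:ℝ)/2) • S M ω) ∂P) atTop
        (nhds (∫ z, φ z ∂μZ))


/-- The averaged matrix `U = K⁻¹ ∑_k U_k`. -/
def Ubar {p : ℕ} (π : Measure X) (Ks : ℕ → Kernel X X) (K : ℕ)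
    (f : X → Fin p → ℝ) : Matrix (Fin p) (Fin p) ℝ :=
  (K : ℝ)⁻¹ • ∑ k ∈ Finset.range K, Umat π Ks f k

/-- The averaged matrix `V = K⁻¹ ∑_k V_k`. -/
def Vbar {p d : ℕ} (π : Measure X) (Ks : ℕ → Kernel X X) (K : ℕ)
    (f : X → Fin p → ℝ) (g : X → Fin d → ℝ) : Matrix (Fin p) (Fin d) ℝ :=
  (K : ℝ)⁻¹ • ∑ k ∈ Finset.range K, Vmat π Ks f g k

/-- Asymptotic variance `Σ_C` of the general (per-component weight) control variate scheme. -/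
def sigmaCvar {p d : ℕ} (π : Measure X) (Ks : ℕ → Kernel X X) (K : ℕ)
    (f : X → Fin p → ℝ) (g : X → Fin d → ℝ)
    (Cs : ℕ → Matrix (Fin p) (Fin d) ℝ) : Matrix (Fin d) (Fin d) ℝ :=
  sigmaBase π Ks K g + (K : ℝ)⁻¹ • ∑ k ∈ Finset.range K,
    ((Cs (k+1))ᵀ * Umat π Ks f k * Cs (k+1)
      - (Cs (k+1))ᵀ * Vmat π Ks f g k - (Vmat π Ks f g k)ᵀ * Cs (k+1))

/-- Asymptotic variance `Σ_C` of the fixed-weight control variate scheme. -/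
def sigmaCfix {p d : ℕ} (π : Measure X) (Ks : ℕ → Kernel X X) (K : ℕ)
    (f : X → Fin p → ℝ) (g : X → Fin d → ℝ)
    (C : Matrix (Fin p) (Fin d) ℝ) : Matrix (Fin d) (Fin d) ℝ :=
  sigmaBase π Ks K g
    + (Cᵀ * Ubar π Ks K f * C - Cᵀ * Vbar π Ks K f g - (Vbar π Ks K f g)ᵀ * C)


section auxstmt7
variable {X : Type*} [MeasurableSpace X]

lemma sweepKer_markov (Ks : ℕ → Kernel X X) [∀ k, IsMarkovKernel (Ks k)] :
    ∀ t k, IsMarkovKernel (sweepKer Ks t k) := by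
  intro t
  induction t with
  | zero => intro k; rw [show sweepKer Ks 0 k = Kernel.id from rfl]; infer_instance
  | succ t ih =>
    intro k
    haveI := ih (k + 1)
    exact Kernel.IsMarkovKernel.comp _ _

lemma sweepKer_add (Ks : ℕ → Kernel X X) [∀ k, IsMarkovKernel (Ks k)] (t s k : ℕ) :
    sweepKer Ks (t + s) k = sweepKer Ks t (k + s) ∘ₖ sweepKer Ks s k := by
  induction s generalizing k with
  | zero => simp [sweepKer]
  | succ s ih =>
    haveI := sweepKer_markov Ks
    have h1 : t + (s + 1) = (t + s) + 1 := by ring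
    rw [h1]
    show sweepKer Ks (t + s) (k + 1) ∘ₖ Ks k = _
    rw [ih (k + 1)]
    have h2 : k + 1 + s = k + (s + 1) := by ring
    rw [h2, Kernel.comp_assoc]
    rfl

lemma sweepKer_period (Ks : ℕ → Kernel X X) (K : ℕ) (hper : ∀ k, Ks (k + K) = Ks k) :
    ∀ t k, sweepKer Ks t (k + K) = sweepKer Ks t k := by
  intro t
  induction t with
  | zero => intro k; rfl
  | succ t ih =>
    intro k
    show sweepKer Ks t (k + K + 1) ∘ₖ Ks (k + K) = sweepKer Ks t (k + 1) ∘ₖ Ks k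
    have h1 : k + K + 1 = (k + 1) + K := by ring
    rw [h1, ih (k + 1), hper k]

end auxstmt7

/-- If `ψ(A) > 0` and `P_k^K(x,A) = 1` for all `x ∈ A`, then `π(A) = 1`. -/
theorem stmt_7
    {X : Type*} [MetricSpace X] [CompleteSpace X] [TopologicalSpace.SeparableSpace X]
    [MeasurableSpace X] [BorelSpace X]
    (K : ℕ) (hK : 2 ≤ K)
    (Ks : ℕ → Kernel X X) [∀ k, IsMarkovKernel (Ks k)]
    (hper : ∀ k, Ks (k + K) = Ks k)
    (π ψ : Measure X) [IsProbabilityMeasure π] [IsProbabilityMeasure ψ]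
    (hA1 : ∀ j < K, IsKernelStationary π (Ks j))
    (hA2 : SweepIrreducible Ks K ψ)
    (k : ℕ) (hk : k < K)
    (A : Set X) (hA : MeasurableSet A) (hψA : 0 < ψ A)
    (habs : ∀ x ∈ A, (sweepKer Ks K k) x A = 1) :
    π A = 1 := by
  classical
  haveI := sweepKer_markov Ks
  have hKpos : 0 < K := by omega
  -- all kernels are stationary
  have hstat : ∀ j, IsKernelStationary π (Ks j) := by
    intro j
    induction j using Nat.strong_induction_on with
    | _ j ih =>
      by_cases hj : j < K
      · exact hA1 j hj
      · have hjK : K ≤ j := le_of_not_gt hj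
        have : j = (j - K) + K := by omega
        rw [this, hper]
        exact ih (j - K) (by omega)
  have hbind : ∀ j, π.bind (Ks j) = π := by
    intro j
    ext B hB
    rw [Measure.bind_apply hB (Ks j).measurable.aemeasurable]
    exact hstat j B hB
  -- π is stationary for all sweeps
  have hsweepbind : ∀ t k, π.bind (sweepKer Ks t k) = π := by
    intro t
    induction t with
    | zero =>
      intro k
      ext B hB
      rw [Measure.bind_apply hB (Kernel.measurable _).aemeasurable]
      calc ∫⁻ x, (Kernel.id : Kernel X X) x B ∂π
          = ∫⁻ x, B.indicator 1 x ∂π := by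
            refine lintegral_congr fun x => ?_
            rw [Kernel.id_apply, Measure.dirac_apply' _ hB]
        _ = π B := lintegral_indicator_one hB
    | succ t ih =>
      intro k
      have hc : (fun x => (sweepKer Ks (t + 1) k) x)
          = fun x => ((Ks k) x).bind (sweepKer Ks t (k + 1)) := by
        funext x
        exact Kernel.comp_apply _ _ _
      show π.bind (fun x => (sweepKer Ks (t + 1) k) x) = π
      rw [hc, ← Measure.bind_bind (Ks k).measurable.aemeasurable (Kernel.measurable _).aemeasurable, hbind k,
        ih (k + 1)]
  -- absorbing for all powers
  have habs_t : ∀ t, ∀ x ∈ A, (sweepKer Ks (K * t) k) x A = 1 := by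
    intro t
    induction t with
    | zero =>
      intro x hx
      simp only [Nat.mul_zero]
      show (Kernel.id : Kernel X X) x A = 1
      rw [Kernel.id_apply, Measure.dirac_apply' _ hA]
      simp [hx]
    | succ t ih =>
      intro x hx
      have hdec : K * (t + 1) = K * t + K := by ring
      rw [hdec, sweepKer_add Ks (K * t) K k, sweepKer_period Ks K hper (K * t) k,
        Kernel.comp_apply' _ _ _ hA]
      haveI : IsMarkovKernel (sweepKer Ks K k) := sweepKer_markov Ks K k
      haveI : IsMarkovKernel (sweepKer Ks (K * t) k) := sweepKer_markov Ks (K * t) k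
      have hmu1 : (sweepKer Ks K k) x A = 1 := habs x hx
      refine le_antisymm ?_ ?_
      · calc ∫⁻ y, (sweepKer Ks (K * t) k) y A ∂(sweepKer Ks K k) x
            ≤ ∫⁻ _, 1 ∂(sweepKer Ks K k) x :=
              lintegral_mono fun y => prob_le_one
          _ = 1 := by simp
      · calc (1 : ℝ≥0∞) = (sweepKer Ks K k) x A := hmu1.symm
          _ = ∫⁻ y in A, 1 ∂(sweepKer Ks K k) x := by rw [setLIntegral_one]
          _ ≤ ∫⁻ y in A, (sweepKer Ks (K * t) k) y A ∂(sweepKer Ks K k) x := by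
              refine setLIntegral_mono (Kernel.measurable_coe _ hA) fun y hy => ?_
              rw [ih y hy]
          _ ≤ ∫⁻ y, (sweepKer Ks (K * t) k) y A ∂(sweepKer Ks K k) x :=
              setLIntegral_le_lintegral _ _
  -- set integral over Aᶜ is zero
  have hzero : ∀ t, ∫⁻ x in Aᶜ, (sweepKer Ks (K * t) k) x A ∂π = 0 := by
    intro t
    have htot : ∫⁻ x, (sweepKer Ks (K * t) k) x A ∂π = π A := by
      rw [← Measure.bind_apply hA (Kernel.measurable _).aemeasurable,
        hsweepbind (K * t) k]
    have hsplit := lintegral_add_compl (fun x => (sweepKer Ks (K * t) k) x A)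
      hA (μ := π)
    have hAint : ∫⁻ x in A, (sweepKer Ks (K * t) k) x A ∂π = π A := by
      calc ∫⁻ x in A, (sweepKer Ks (K * t) k) x A ∂π
          = ∫⁻ _ in A, 1 ∂π := by
            refine setLIntegral_congr_fun hA ?_
            intro x hx; exact habs_t t x hx
        _ = π A := setLIntegral_one A
    rw [htot, hAint] at hsplit
    have hfin : π A ≠ ⊤ := (measure_lt_top π A).ne
    nth_rewrite 2 [← add_zero (π A)] at hsplit
    exact (ENNReal.add_right_inj hfin).mp hsplit
  -- null sets
  set N : ℕ → Set X := fun t => Aᶜ ∩ {x | 0 < (sweepKer Ks (K * t) k) x A} with hN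
  have hNnull : ∀ t, π (N t) = 0 := by
    intro t
    have hmeas : Measurable fun x => (sweepKer Ks (K * t) k) x A :=
      Kernel.measurable_coe _ hA
    have hae := (setLIntegral_eq_zero_iff hA.compl hmeas).mp (hzero t)
    rw [hN]
    refine measure_mono_null ?_ (ae_iff.mp hae)
    intro x hx
    simp only [Set.mem_setOf_eq, Classical.not_imp]
    exact ⟨hx.1, hx.2.ne'⟩
  have hsub : Aᶜ ⊆ ⋃ t, N t := by
    intro x hx
    obtain ⟨t, ht1, htpos⟩ := hA2 k hk A hA hψA x
    exact Set.mem_iUnion.mpr ⟨t, hx, htpos⟩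
  have hAc : π Aᶜ = 0 :=
    measure_mono_null hsub (measure_iUnion_null hNnull)
  exact (prob_compl_eq_zero_iff hA).mp hAc

end
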